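/- Let e₁ and e₂ be real numbers with 0 < e₂ < e₁ < 1. Define a sequence (Ω_{2m+1})_{m≥0} by Ω₁ = 1, Ω₃ = (e₁² + e₂²)/2, and for n = 0, 1, 2, …, Ω_{2n+5} = [ (e₁² + e₂²)(2n+1)(2n+3) Ω_{2n+3} − 2 e₁² e₂² (n+1)|2n−1| Ω_{2n+1} ] / (2(n+2)(2n+3)). Then the series Σ_{m=0}^∞ Ω_{2m+1} converges and ∫_{e₂}^{e₁} ln((1 + q)/(1 − q)) · q² / √((e₁² − q²)(q² − e₂²)) dq = π · ( Σ_{m=0}^∞ Ω_{2m+1} − 1 ). -/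

import Mathlib

open Real intervalIntegral

/-- Incomplete elliptic integral of the first kind `F(φ, k)`. -/
noncomputable def ellipticF (φ k : ℝ) : ℝ :=
  ∫ θ in (0:ℝ)..φ, (1 - k ^ 2 * Real.sin θ ^ 2) ^ (-(1:ℝ)/2)

/-- Incomplete elliptic integral of the second kind `E(φ, k)`. -/
noncomputable def ellipticE (φ k : ℝ) : ℝ :=
  ∫ θ in (0:ℝ)..φ, (1 - k ^ 2 * Real.sin θ ^ 2) ^ ((1:ℝ)/2)

/-- Complete elliptic integral of the first kind `K(k)`. -/
noncomputable def completeK (k : ℝ) : ℝ := ellipticF (Real.pi / 2) k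

/-- Complete elliptic integral of the second kind `E(k)`. -/
noncomputable def completeE (k : ℝ) : ℝ := ellipticE (Real.pi / 2) k

/-- Inverse hyperbolic tangent. -/
noncomputable def arctanh (x : ℝ) : ℝ := Real.log ((1 + x) / (1 - x)) / 2

section Aux
open MeasureTheory Set

noncomputable def MM (e₁ e₂ : ℝ) (n : ℕ) : ℝ :=
  ∫ θ in (0:ℝ)..(π/2), (e₂^2 + (e₁^2-e₂^2) * Real.sin θ^2)^n

lemma MM_cont (e₁ e₂ : ℝ) (n : ℕ) :
    Continuous (fun θ : ℝ => (e₂^2 + (e₁^2-e₂^2) * Real.sin θ^2)^n) := by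
  fun_prop

lemma MM_rec (e₁ e₂ : ℝ) (n : ℕ) :
    (2*(n:ℝ)+4) * MM e₁ e₂ (n+2)
      = (2*(n:ℝ)+3)*(e₁^2+e₂^2) * MM e₁ e₂ (n+1) - 2*((n:ℝ)+1)*e₁^2*e₂^2 * MM e₁ e₂ n := by
  set c := e₁^2 - e₂^2 with hc
  set f : ℝ → ℝ := fun θ => e₂^2 + c * Real.sin θ^2 with hf
  have hD : ∀ θ : ℝ, HasDerivAt (fun θ => Real.sin θ * Real.cos θ * f θ^(n+1))
      ((Real.cos θ * Real.cos θ + Real.sin θ * (-Real.sin θ)) * f θ^(n+1)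
        + Real.sin θ * Real.cos θ *
          ((↑(n+1) : ℝ) * f θ^n * (c * (2 * Real.sin θ^1 * Real.cos θ)))) θ := by
    intro θ
    have h1 : HasDerivAt Real.sin (Real.cos θ) θ := Real.hasDerivAt_sin θ
    have h2 : HasDerivAt Real.cos (-Real.sin θ) θ := Real.hasDerivAt_cos θ
    have hsc : HasDerivAt (fun θ => Real.sin θ * Real.cos θ)
        (Real.cos θ * Real.cos θ + Real.sin θ * (-Real.sin θ)) θ := h1.mul h2
    have hfd : HasDerivAt f (c * (2 * Real.sin θ^1 * Real.cos θ)) θ := by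
      simpa [hf] using (((h1.pow 2)).const_mul c).const_add (e₂^2)
    have hfp : HasDerivAt (fun θ => f θ^(n+1))
        ((↑(n+1) : ℝ) * f θ^n * (c * (2 * Real.sin θ^1 * Real.cos θ))) θ := by
      convert hfd.pow (n+1) using 1
      · rfl
      · rfl
      · rfl
      · simp
    exact hsc.mul hfp
  have hint0 : (∫ θ in (0:ℝ)..(π/2),
      ((Real.cos θ * Real.cos θ + Real.sin θ * (-Real.sin θ)) * f θ^(n+1)
        + Real.sin θ * Real.cos θ *
          ((↑(n+1) : ℝ) * f θ^n * (c * (2 * Real.sin θ^1 * Real.cos θ))))) = 0 := by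
    rw [intervalIntegral.integral_eq_sub_of_hasDerivAt (fun θ _ => hD θ)]
    · simp
    · apply Continuous.intervalIntegrable
      fun_prop
  -- pointwise identity
  have hpt : ∀ θ : ℝ,
      c * ((Real.cos θ * Real.cos θ + Real.sin θ * (-Real.sin θ)) * f θ^(n+1)
        + Real.sin θ * Real.cos θ *
          ((↑(n+1) : ℝ) * f θ^n * (c * (2 * Real.sin θ^1 * Real.cos θ))))
      = (2*(n:ℝ)+3)*(e₁^2+e₂^2) * f θ^(n+1) - (2*(n:ℝ)+4) * f θ^(n+2)
          - 2*((n:ℝ)+1)*e₁^2*e₂^2 * f θ^n := by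
    intro θ
    have hco : Real.cos θ^2 = 1 - Real.sin θ^2 := Real.cos_sq' θ
    have hs : Real.sin θ * Real.sin θ = Real.sin θ^2 := (sq (Real.sin θ)).symm
    have hcc : Real.cos θ * Real.cos θ = 1 - Real.sin θ^2 := by rw [← hco]; ring
    simp only [hf]
    push_cast
    linear_combination (c * (e₂^2 + c*Real.sin θ^2)^(n+1)
      + 2*((n:ℝ)+1)*c^2*(Real.sin θ)^2*(e₂^2 + c*Real.sin θ^2)^n) * hco
  have h2 : (∫ θ in (0:ℝ)..(π/2),
      ((2*(n:ℝ)+3)*(e₁^2+e₂^2) * f θ^(n+1) - (2*(n:ℝ)+4) * f θ^(n+2)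
        - 2*((n:ℝ)+1)*e₁^2*e₂^2 * f θ^n)) = 0 := by
    rw [intervalIntegral.integral_congr (g := fun θ =>
      c * ((Real.cos θ * Real.cos θ + Real.sin θ * (-Real.sin θ)) * f θ^(n+1)
        + Real.sin θ * Real.cos θ *
          ((↑(n+1) : ℝ) * f θ^n * (c * (2 * Real.sin θ^1 * Real.cos θ)))))
      (fun θ _ => (hpt θ).symm)]
    rw [intervalIntegral.integral_const_mul, hint0, mul_zero]
  have i1 : IntervalIntegrable (fun θ => f θ^(n+1)) MeasureTheory.volume 0 (π/2) := by
    apply Continuous.intervalIntegrable; fun_prop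
  have i2 : IntervalIntegrable (fun θ => f θ^(n+2)) MeasureTheory.volume 0 (π/2) := by
    apply Continuous.intervalIntegrable; fun_prop
  have i3 : IntervalIntegrable (fun θ => f θ^n) MeasureTheory.volume 0 (π/2) := by
    apply Continuous.intervalIntegrable; fun_prop
  rw [intervalIntegral.integral_sub ((i1.const_mul _).sub (i2.const_mul _)) (i3.const_mul _),
    intervalIntegral.integral_sub (i1.const_mul _) (i2.const_mul _),
    intervalIntegral.integral_const_mul, intervalIntegral.integral_const_mul,
    intervalIntegral.integral_const_mul] at h2
  have hM1 : MM e₁ e₂ (n+1) = ∫ θ in (0:ℝ)..(π/2), f θ^(n+1) := rfl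
  have hM2 : MM e₁ e₂ (n+2) = ∫ θ in (0:ℝ)..(π/2), f θ^(n+2) := rfl
  have hM3 : MM e₁ e₂ n = ∫ θ in (0:ℝ)..(π/2), f θ^n := rfl
  rw [hM1, hM2, hM3]
  linarith

section basicM
variable {e₁ e₂ : ℝ}

lemma f_mem (h0 : 0 < e₂) (h21 : e₂ < e₁) (θ : ℝ) : e₂^2 ≤ e₂^2 + (e₁^2-e₂^2) * Real.sin θ^2 ∧
    e₂^2 + (e₁^2-e₂^2) * Real.sin θ^2 ≤ e₁^2 := by
  have hc : 0 ≤ e₁^2 - e₂^2 := by nlinarith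
  have hs1 : Real.sin θ^2 ≤ 1 := Real.sin_sq_le_one θ
  have hs0 : 0 ≤ Real.sin θ^2 := sq_nonneg _
  constructor <;> nlinarith

lemma MM_nonneg (h0 : 0 < e₂) (h21 : e₂ < e₁) (n : ℕ) : 0 ≤ MM e₁ e₂ n := by
  apply intervalIntegral.integral_nonneg (by positivity)
  intro θ _
  have h := (f_mem h0 h21 θ).1
  exact pow_nonneg (by nlinarith) n

lemma MM_le (h0 : 0 < e₂) (h21 : e₂ < e₁) (n : ℕ) : MM e₁ e₂ n ≤ π/2 * (e₁^2)^n := by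
  have : MM e₁ e₂ n ≤ ∫ _ in (0:ℝ)..(π/2), (e₁^2)^n := by
    apply intervalIntegral.integral_mono_on (by positivity)
    · apply Continuous.intervalIntegrable; fun_prop
    · exact intervalIntegrable_const (μ := MeasureTheory.volume)
    · intro θ _
      have h := f_mem (e₁ := e₁) (e₂ := e₂) h0 h21 θ
      exact pow_le_pow_left₀ (by nlinarith [h.1]) h.2 n
  simpa [mul_comm] using this

lemma MM_zero : MM e₁ e₂ 0 = π/2 := by simp [MM]

lemma MM_one : MM e₁ e₂ 1 = (e₁^2 + e₂^2) * π/4 := by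
  have hs : ∫ θ in (0:ℝ)..(π/2), Real.sin θ^2 = π/4 := by
    rw [integral_sin_sq]; simp; ring
  have : MM e₁ e₂ 1 = ∫ θ in (0:ℝ)..(π/2), (e₂^2 + (e₁^2-e₂^2) * Real.sin θ^2) := by
    simp [MM]
  rw [this, intervalIntegral.integral_add (intervalIntegrable_const (μ := MeasureTheory.volume))
      (by apply Continuous.intervalIntegrable; fun_prop),
    intervalIntegral.integral_const_mul, hs]
  simp
  ring

end basicM

lemma omega_eq {e₁ e₂ : ℝ} (h0 : 0 < e₂) (h21 : e₂ < e₁) (Ω : ℕ → ℝ)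
    (hΩ0 : Ω 0 = 1) (hΩ1 : Ω 1 = (e₁ ^ 2 + e₂ ^ 2) / 2)
    (hΩrec : ∀ n : ℕ, Ω (n + 2) =
      ((e₁ ^ 2 + e₂ ^ 2) * (2 * (n:ℝ) + 1) * (2 * (n:ℝ) + 3) * Ω (n + 1)
          - 2 * e₁ ^ 2 * e₂ ^ 2 * ((n:ℝ) + 1) * |2 * (n:ℝ) - 1| * Ω n)
        / (2 * ((n:ℝ) + 2) * (2 * (n:ℝ) + 3))) :
    ∀ n : ℕ, Ω (n+1) * ((2*(n:ℝ)+1) * π) = 2 * MM e₁ e₂ (n+1) := by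
  have hπ : (0:ℝ) < π := Real.pi_pos
  have key : ∀ n : ℕ, Ω (n+1) * ((2*(n:ℝ)+1) * π) = 2 * MM e₁ e₂ (n+1) ∧
      Ω (n+2) * ((2*(n:ℝ)+3) * π) = 2 * MM e₁ e₂ (n+2) := by
    intro n
    induction n with
    | zero =>
      constructor
      · rw [hΩ1, MM_one]
        push_cast
        ring
      · have h2 := hΩrec 0
        have hM := MM_rec e₁ e₂ 0
        rw [MM_one, MM_zero] at hM
        simp only [Nat.cast_zero] at h2 hM
        have : |2 * (0:ℝ) - 1| = 1 := by norm_num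
        rw [this, hΩ0, hΩ1] at h2
        rw [zero_add] at h2 ⊢
        rw [h2]
        push_cast
        push_cast at hM
        field_simp
        linarith
    | succ m ih =>
      refine ⟨by simpa [Nat.cast_succ] using (by push_cast; linarith [ih.2] : Ω (m+2) * ((2*((m:ℝ)+1)+1) * π) = 2 * MM e₁ e₂ (m+2)), ?_⟩
      have h2 := hΩrec (m+1)
      have hM := MM_rec e₁ e₂ (m+1)
      have habs : |2 * ((m:ℝ)+1) - 1| = 2*(m:ℝ)+1 := by
        rw [show 2*((m:ℝ)+1)-1 = 2*(m:ℝ)+1 by ring, abs_of_nonneg (by positivity)]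
      push_cast at h2 hM ⊢
      rw [habs] at h2
      have hm1 : Ω (m+2) = 2 * MM e₁ e₂ (m+2) / ((2*(m:ℝ)+3) * π) := by
        rw [eq_div_iff (by positivity)]; exact_mod_cast ih.2
      have hm0 : Ω (m+1) = 2 * MM e₁ e₂ (m+1) / ((2*(m:ℝ)+1) * π) := by
        rw [eq_div_iff (by positivity)]; exact_mod_cast ih.1
      rw [hm1, hm0] at h2
      rw [h2]
      have hM3 : MM e₁ e₂ (m+3) = ((2*(m:ℝ)+5)*(e₁^2+e₂^2) * MM e₁ e₂ (m+2)
          - 2*((m:ℝ)+2)*e₁^2*e₂^2 * MM e₁ e₂ (m+1)) / (2*(m:ℝ)+6) := by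
        rw [eq_div_iff (by positivity)]
        linarith
      rw [hM3]
      have h1 : (2*(m:ℝ)+1) ≠ 0 := by positivity
      have h3 : (2*(m:ℝ)+3) ≠ 0 := by positivity
      have h6 : (2*(m:ℝ)+6) ≠ 0 := by positivity
      field_simp
      ring
  exact fun n => (key n).1

lemma integral_eq {e₁ e₂ : ℝ} (h0 : 0 < e₂) (h21 : e₂ < e₁) (h11 : e₁ < 1) :
    (∫ q in e₂..e₁,
        Real.log ((1 + q) / (1 - q)) * q ^ 2 / Real.sqrt ((e₁ ^ 2 - q ^ 2) * (q ^ 2 - e₂ ^ 2)))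
      = ∑' k : ℕ, 2 * (1/(2*(k:ℝ)+1)) * MM e₁ e₂ (k+1) := by
  have h1 : (0:ℝ) < e₁ := h0.trans h21
  have hc : (0:ℝ) < e₁^2 - e₂^2 := by nlinarith
  set c := e₁^2 - e₂^2 with hcdef
  set f : ℝ → ℝ := fun θ => e₂^2 + c * Real.sin θ^2 with hfdef
  set φ : ℝ → ℝ := fun θ => Real.sqrt (f θ) with hφdef
  have hfpos : ∀ θ, 0 < f θ := fun θ => by
    have := sq_nonneg (Real.sin θ); simp only [hfdef]; nlinarith
  have hfle : ∀ θ, f θ ≤ e₁^2 := fun θ => by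
    have := Real.sin_sq_le_one θ; simp only [hfdef]; nlinarith
  have hφpos : ∀ θ, 0 < φ θ := fun θ => Real.sqrt_pos.2 (hfpos θ)
  have hφle : ∀ θ, φ θ ≤ e₁ := fun θ => by
    have := Real.sqrt_le_sqrt (hfle θ)
    simpa [Real.sqrt_sq h1.le] using this
  have hφcont : Continuous φ := by
    apply Real.continuous_sqrt.comp; fun_prop
  have hφ0 : φ 0 = e₂ := by simp [hφdef, hfdef, Real.sqrt_sq h0.le]
  have hφpi : φ (π/2) = e₁ := by
    have hfpi : f (π/2) = e₁^2 := by
      simp only [hfdef]; rw [Real.sin_pi_div_two, hcdef]; ring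
    simp only [hφdef]; rw [hfpi, Real.sqrt_sq h1.le]
  have hmono : StrictMonoOn φ (Icc 0 (π/2)) := by
    intro a ha b hb hab
    have hsab : Real.sin a < Real.sin b := by
      apply Real.strictMonoOn_sin _ _ hab
      · exact ⟨by linarith [ha.1, Real.pi_pos], ha.2⟩
      · exact ⟨by linarith [hb.1, Real.pi_pos], hb.2⟩
    have hsa : 0 ≤ Real.sin a := Real.sin_nonneg_of_nonneg_of_le_pi ha.1
      (by linarith [ha.2, Real.pi_pos])
    apply Real.sqrt_lt_sqrt (hfpos a).le
    have h2 : Real.sin a^2 < Real.sin b^2 := by nlinarith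
    simp only [hfdef]
    nlinarith [mul_lt_mul_of_pos_left h2 hc]
  have hinj : InjOn φ (Ioo 0 (π/2)) :=
    (hmono.mono Ioo_subset_Icc_self).injOn
  have himg : φ '' Ioo 0 (π/2) = Ioo e₂ e₁ := by
    apply Subset.antisymm
    · rintro x ⟨θ, hθ, rfl⟩
      constructor
      · rw [← hφ0]
        exact hmono (left_mem_Icc.2 (by positivity)) (Ioo_subset_Icc_self hθ) hθ.1
      · rw [← hφpi]
        exact hmono (Ioo_subset_Icc_self hθ) (right_mem_Icc.2 (by positivity)) hθ.2
    · have := intermediate_value_Ioo (by positivity : (0:ℝ) ≤ π/2) hφcont.continuousOn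
      rwa [hφ0, hφpi] at this
  set φ' : ℝ → ℝ := fun θ => c * (2 * Real.sin θ^1 * Real.cos θ) / (2 * φ θ) with hφ'def
  have hderiv : ∀ θ ∈ Ioo 0 (π/2), HasDerivWithinAt φ (φ' θ) (Ioo 0 (π/2)) θ := by
    intro θ _
    have hfd : HasDerivAt f (c * (2 * Real.sin θ^1 * Real.cos θ)) θ := by
      simpa [hfdef] using (((Real.hasDerivAt_sin θ).pow 2).const_mul c).const_add (e₂^2)
    exact (hfd.sqrt (hfpos θ).ne').hasDerivWithinAt
  -- the integral over Ioo e₂ e₁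
  have step1 : (∫ q in e₂..e₁,
        Real.log ((1 + q) / (1 - q)) * q ^ 2 / Real.sqrt ((e₁ ^ 2 - q ^ 2) * (q ^ 2 - e₂ ^ 2)))
      = ∫ q in Ioo e₂ e₁,
        Real.log ((1 + q) / (1 - q)) * q ^ 2 / Real.sqrt ((e₁ ^ 2 - q ^ 2) * (q ^ 2 - e₂ ^ 2)) := by
    rw [intervalIntegral.integral_of_le h21.le, MeasureTheory.integral_Ioc_eq_integral_Ioo]
  have step2 : (∫ q in Ioo e₂ e₁,
        Real.log ((1 + q) / (1 - q)) * q ^ 2 / Real.sqrt ((e₁ ^ 2 - q ^ 2) * (q ^ 2 - e₂ ^ 2)))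
      = ∫ θ in Ioo 0 (π/2), |φ' θ| •
          (Real.log ((1 + φ θ) / (1 - φ θ)) * φ θ ^ 2
            / Real.sqrt ((e₁ ^ 2 - φ θ ^ 2) * (φ θ ^ 2 - e₂ ^ 2))) := by
    rw [← himg, MeasureTheory.integral_image_eq_integral_abs_deriv_smul measurableSet_Ioo
      hderiv hinj]
  have key : ∀ θ ∈ Ioo 0 (π/2), |φ' θ| •
          (Real.log ((1 + φ θ) / (1 - φ θ)) * φ θ ^ 2
            / Real.sqrt ((e₁ ^ 2 - φ θ ^ 2) * (φ θ ^ 2 - e₂ ^ 2)))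
      = ∑' k : ℕ, 2 * (1/(2*(k:ℝ)+1)) * φ θ ^ (2*k+2) := by
    intro θ hθ
    have hs : 0 < Real.sin θ := Real.sin_pos_of_pos_of_lt_pi hθ.1
      (by linarith [hθ.2, Real.pi_pos])
    have hco : 0 < Real.cos θ := Real.cos_pos_of_mem_Ioo
      ⟨by linarith [hθ.1, Real.pi_pos], hθ.2⟩
    have hsq : φ θ ^ 2 = f θ := Real.sq_sqrt (hfpos θ).le
    have h₁ : e₁^2 - φ θ^2 = c * Real.cos θ^2 := by
      rw [hsq]
      simp only [hfdef]
      have := Real.sin_sq_add_cos_sq θ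
      rw [hcdef]; nlinarith
    have h₂ : φ θ^2 - e₂^2 = c * Real.sin θ^2 := by rw [hsq]; simp only [hfdef]; ring
    have hsqrt : Real.sqrt ((e₁ ^ 2 - φ θ ^ 2) * (φ θ ^ 2 - e₂ ^ 2))
        = c * Real.sin θ * Real.cos θ := by
      rw [h₁, h₂, show c * Real.cos θ^2 * (c * Real.sin θ^2) = (c * Real.sin θ * Real.cos θ)^2
        by ring, Real.sqrt_sq (by positivity)]
    have hφ'pos : 0 < φ' θ := by
      simp only [hφ'def, pow_one]
      have := hφpos θ
      positivity
    have hlhs : |φ' θ| •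
          (Real.log ((1 + φ θ) / (1 - φ θ)) * φ θ ^ 2
            / Real.sqrt ((e₁ ^ 2 - φ θ ^ 2) * (φ θ ^ 2 - e₂ ^ 2)))
        = Real.log ((1 + φ θ) / (1 - φ θ)) * φ θ := by
      rw [abs_of_pos hφ'pos, hsqrt, smul_eq_mul]
      simp only [hφ'def, pow_one]
      have h3 := hφpos θ
      field_simp
    rw [hlhs]
    -- power series
    have hx1 : φ θ < 1 := lt_of_le_of_lt (hφle θ) h11
    have hx0 : 0 < φ θ := hφpos θ
    have habs : |φ θ| < 1 := by rw [abs_of_pos hx0]; exact hx1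
    have hS := Real.hasSum_log_sub_log_of_abs_lt_one habs
    have hlog : Real.log ((1 + φ θ) / (1 - φ θ))
        = Real.log (1 + φ θ) - Real.log (1 - φ θ) :=
      Real.log_div (by positivity) (by linarith)
    have hS2 := hS.mul_right (φ θ)
    have hS3 : HasSum (fun k : ℕ => 2 * (1/(2*(k:ℝ)+1)) * φ θ ^ (2*k+2))
        (Real.log ((1 + φ θ) / (1 - φ θ)) * φ θ) := by
      rw [hlog]
      convert hS2 using 2 with k
      · rfl
      rw [show 2*k+2 = (2*k+1)+1 by ring, pow_succ]
      ring
    exact hS3.tsum_eq.symm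
  have step3 : (∫ θ in Ioo 0 (π/2), |φ' θ| •
          (Real.log ((1 + φ θ) / (1 - φ θ)) * φ θ ^ 2
            / Real.sqrt ((e₁ ^ 2 - φ θ ^ 2) * (φ θ ^ 2 - e₂ ^ 2))))
      = ∫ θ in Ioo 0 (π/2), ∑' k : ℕ, 2 * (1/(2*(k:ℝ)+1)) * φ θ ^ (2*k+2) :=
    MeasureTheory.setIntegral_congr_fun measurableSet_Ioo key
  -- each term integral
  have hterm : ∀ k : ℕ, (∫ θ in Ioo 0 (π/2), 2 * (1/(2*(k:ℝ)+1)) * φ θ ^ (2*k+2))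
      = 2 * (1/(2*(k:ℝ)+1)) * MM e₁ e₂ (k+1) := by
    intro k
    have hptw : ∀ θ : ℝ, φ θ ^ (2*k+2) = f θ ^ (k+1) := by
      intro θ
      rw [show 2*k+2 = 2*(k+1) by ring, pow_mul, Real.sq_sqrt (hfpos θ).le]
    have : (∫ θ in Ioo 0 (π/2), 2 * (1/(2*(k:ℝ)+1)) * φ θ ^ (2*k+2))
        = ∫ θ in Ioo 0 (π/2), 2 * (1/(2*(k:ℝ)+1)) * f θ ^ (k+1) := by
      congr 1; ext θ; rw [hptw]
    rw [this, ← MeasureTheory.integral_Ioc_eq_integral_Ioo,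
      ← intervalIntegral.integral_of_le (by positivity : (0:ℝ) ≤ π/2),
      intervalIntegral.integral_const_mul]
    rfl
  have hint : ∀ k : ℕ, MeasureTheory.Integrable
      (fun θ => 2 * (1/(2*(k:ℝ)+1)) * φ θ ^ (2*k+2))
      (MeasureTheory.volume.restrict (Ioo 0 (π/2))) := by
    intro k
    have : Continuous (fun θ => 2 * (1/(2*(k:ℝ)+1)) * φ θ ^ (2*k+2)) := by fun_prop
    exact (this.integrableOn_Icc.mono_set Ioo_subset_Icc_self)
  have hnorm : ∀ k : ℕ, (∫ θ in Ioo 0 (π/2), ‖2 * (1/(2*(k:ℝ)+1)) * φ θ ^ (2*k+2)‖)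
      = 2 * (1/(2*(k:ℝ)+1)) * MM e₁ e₂ (k+1) := by
    intro k
    rw [← hterm k]
    congr 1; ext θ
    rw [Real.norm_of_nonneg]
    have := (hφpos θ).le
    positivity
  have hsum : Summable (fun k : ℕ =>
      ∫ θ in Ioo 0 (π/2), ‖2 * (1/(2*(k:ℝ)+1)) * φ θ ^ (2*k+2)‖) := by
    apply Summable.of_nonneg_of_le
      (fun k => by rw [hnorm k]; have := MM_nonneg h0 h21 (k+1); positivity)
      (fun k => ?_)
      (((summable_geometric_of_lt_one (by positivity) (by nlinarith)).mul_left (π * e₁^2)) :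
        Summable fun k : ℕ => π * e₁^2 * (e₁^2)^k)
    rw [hnorm k]
    have hMle := MM_le h0 h21 (k+1)
    have hMge := MM_nonneg h0 h21 (k+1)
    have hfrac : 2 * (1/(2*(k:ℝ)+1)) ≤ 2 := by
      have h1k : (1:ℝ) ≤ 2*(k:ℝ)+1 := by
        have := Nat.cast_nonneg (α := ℝ) k; linarith
      have h2k : 1/(2*(k:ℝ)+1) ≤ 1 := by
        rw [div_le_one (by positivity)]; exact h1k
      linarith
    calc 2 * (1/(2*(k:ℝ)+1)) * MM e₁ e₂ (k+1) ≤ 2 * MM e₁ e₂ (k+1) := by nlinarith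
      _ ≤ 2 * (π/2 * (e₁^2)^(k+1)) := by nlinarith
      _ = π * e₁^2 * (e₁^2)^k := by rw [pow_succ]; ring
  rw [step1, step2, step3,
    ← MeasureTheory.integral_tsum_of_summable_integral_norm hint hsum]
  exact tsum_congr hterm


end Aux

open MeasureTheory Set in
theorem stmt_4 (e₁ e₂ : ℝ) (h0 : 0 < e₂) (h21 : e₂ < e₁) (h11 : e₁ < 1)
    (Ω : ℕ → ℝ) (hΩ0 : Ω 0 = 1) (hΩ1 : Ω 1 = (e₁ ^ 2 + e₂ ^ 2) / 2)
    (hΩrec : ∀ n : ℕ, Ω (n + 2) =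
      ((e₁ ^ 2 + e₂ ^ 2) * (2 * (n:ℝ) + 1) * (2 * (n:ℝ) + 3) * Ω (n + 1)
          - 2 * e₁ ^ 2 * e₂ ^ 2 * ((n:ℝ) + 1) * |2 * (n:ℝ) - 1| * Ω n)
        / (2 * ((n:ℝ) + 2) * (2 * (n:ℝ) + 3))) :
    Summable Ω ∧
      (∫ q in e₂..e₁,
          Real.log ((1 + q) / (1 - q)) * q ^ 2 / Real.sqrt ((e₁ ^ 2 - q ^ 2) * (q ^ 2 - e₂ ^ 2)))
        = Real.pi * ((∑' m, Ω m) - 1) := by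
  have hπ : (0:ℝ) < π := Real.pi_pos
  have hoe := omega_eq h0 h21 Ω hΩ0 hΩ1 hΩrec
  have hb : ∀ n : ℕ, Ω (n+1) = 2 * MM e₁ e₂ (n+1) / ((2*(n:ℝ)+1)*π) := by
    intro n
    rw [eq_div_iff (by positivity)]
    exact hoe n
  have hsum1 : Summable (fun n : ℕ => Ω (n+1)) := by
    apply Summable.of_nonneg_of_le (fun n => ?_) (fun n => ?_)
      (((summable_geometric_of_lt_one (by positivity) (by nlinarith)).mul_left (e₁^2)) :
        Summable fun k : ℕ => e₁^2 * (e₁^2)^k)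
    · rw [hb n]
      have := MM_nonneg h0 h21 (n+1)
      positivity
    · rw [hb n, div_le_iff₀ (by positivity)]
      have hMle := MM_le h0 h21 (n+1)
      have hMge := MM_nonneg h0 h21 (n+1)
      have hn : (0:ℝ) ≤ (n:ℝ) := Nat.cast_nonneg n
      have hA : (0:ℝ) ≤ (e₁^2)^n * e₁^2 * π := by positivity
      rw [pow_succ] at hMle
      nlinarith [mul_nonneg hn hA]
  have hsummable : Summable Ω := (summable_nat_add_iff 1).mp hsum1
  refine ⟨hsummable, ?_⟩
  rw [integral_eq h0 h21 h11]
  have ht : ∀ k : ℕ, 2 * (1/(2*(k:ℝ)+1)) * MM e₁ e₂ (k+1) = π * Ω (k+1) := by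
    intro k
    have hk : (2*(k:ℝ)+1) ≠ 0 := by positivity
    field_simp
    linarith [hoe k]
  rw [tsum_congr ht, tsum_mul_left]
  have hz := hsummable.tsum_eq_zero_add
  rw [hz, hΩ0]
  ring
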